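/- arXiv:2409.18229 — 2 statements merged into one kernel-verified Lean document; each statement's English description precedes it below -/
import Mathlib

section
/- Let p < q be primes, let α, β be positive integers, let ε be a natural number with β > ε, set n = p^α·q^β and m = p^{α+ε}·q^{β−ε}, and let u ≥ 2 be an integer with gcd(m, u) = 1 and gcd(n, u) = 1. Then D(n·u‖m·u) ≤ D(n‖m). -/
/-!
If `a` and `b` have the same primes and `Ω a = Ω b`, the logarithmic term of `D(a‖b)` vanishes
and `D(a‖b) = -S / Ω a` with `S = ∑ᵣ aᵣ log (bᵣ / aᵣ)`. Gibbs' inequality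
`x log (y / x) ≤ y - x` gives `S ≤ Ω b - Ω a = 0`. Multiplying `a` and `b` by `u` coprime to
both adds the primes of `u` with equal exponents, which contribute nothing to `S`, while `Ω`
grows by `Ω u`; hence `D(au‖bu) = -S / (Ω a + Ω u) ≤ -S / Ω a = D(a‖b)`.
-/

/-- `Ω(n)`: number of prime factors of `n` counted with multiplicity. -/
def bigOmega (n : ℕ) : ℕ := n.primeFactorsList.length

/-- The Kullback–Leibler divergence of two positive integers
`a = q_1^{a_1} ⋯ q_r^{a_r}` and `b = q'_1^{b_1} ⋯ q'_r^{b_r}` (primes listed in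
ascending order): `D(a‖b) = log(Ω(b)/Ω(a)) − (1/Ω(a)) ∑_i a_i log (b_i/a_i)`. -/
noncomputable def numDivergence (a b : ℕ) : ℝ :=
  Real.log ((bigOmega b : ℝ) / (bigOmega a : ℝ)) -
    (1 / (bigOmega a : ℝ)) *
      ∑ i ∈ Finset.range a.primeFactors.card,
        (a.factorization ((a.primeFactors.sort (· ≤ ·)).getD i 1) : ℝ) *
          Real.log ((b.factorization ((b.primeFactors.sort (· ≤ ·)).getD i 1) : ℝ) /
            (a.factorization ((a.primeFactors.sort (· ≤ ·)).getD i 1) : ℝ))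

open ArithmeticFunction Finset
open scoped ArithmeticFunction.Omega

theorem Finset.sum_range_card_sort_getD {α M : Type*} [LinearOrder α] [AddCommMonoid M]
    (s : Finset α) (f : α → M) (d : α) :
    ∑ i ∈ range #s, f ((s.sort (· ≤ ·)).getD i d) = ∑ r ∈ s, f r := by
  rw [← s.length_sort (· ≤ ·), Finset.sum_range]
  simp only [Fin.is_lt, List.getD_eq_getElem, Fin.sum_univ_fun_getElem]
  rw [Finset.sum_eq_multiset_sum, ← s.sort_eq (· ≤ ·), Multiset.map_coe, Multiset.sum_coe]

theorem ArithmeticFunction.cardFactors_eq_sum_primeFactors (n : ℕ) :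
    Ω n = ∑ r ∈ n.primeFactors, n.factorization r := by
  rw [cardFactors_eq_sum_factorization, Finsupp.sum, Nat.support_factorization]

theorem Nat.Coprime.cardFactors_mul {a b : ℕ} (h : a.Coprime b) : Ω (a * b) = Ω a + Ω b := by
  simp only [cardFactors_eq_sum_factorization, Nat.factorization_mul_of_coprime h]
  exact Finsupp.sum_add_index' (fun _ => rfl) (fun _ _ _ => rfl)

theorem mul_log_div_le_sub {x y : ℝ} (hx : 0 < x) (hy : 0 < y) :
    x * Real.log (y / x) ≤ y - x := by
  have := mul_le_mul_of_nonneg_left (Real.log_le_sub_one_of_pos (div_pos hy hx)) hx.le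
  rwa [mul_sub, mul_div_cancel₀ _ hx.ne', mul_one] at this

/-- The sum `∑ᵢ aᵢ log (bᵢ / aᵢ)` of `D(a‖b)`, indexed by the primes of `a` rather than by
rank. -/
noncomputable def divergenceSum (a b : ℕ) : ℝ :=
  ∑ r ∈ a.primeFactors,
    (a.factorization r : ℝ) * Real.log (b.factorization r / a.factorization r)

theorem numDivergence_eq_of_primeFactors_eq {a b : ℕ} (h : a.primeFactors = b.primeFactors) :
    numDivergence a b = Real.log ((Ω b : ℝ) / Ω a) - divergenceSum a b / Ω a := by
  rw [numDivergence, ← h, one_div_mul_eq_div, divergenceSum]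
  congr 2
  exact sum_range_card_sort_getD _
    (fun r => (a.factorization r : ℝ) * Real.log (b.factorization r / a.factorization r)) 1

theorem divergenceSum_le {a b : ℕ} (h : a.primeFactors = b.primeFactors) :
    divergenceSum a b ≤ Ω b - Ω a := by
  rw [cardFactors_eq_sum_primeFactors a, cardFactors_eq_sum_primeFactors b, ← h]
  push_cast
  rw [← sum_sub_distrib]
  refine sum_le_sum fun r hr => mul_log_div_le_sub ?_ ?_ <;>
    exact_mod_cast Nat.pos_of_ne_zero (Finsupp.mem_support_iff.mp (by simpa [h] using hr))

theorem divergenceSum_mul_coprime {a b u : ℕ} (ha : a.Coprime u) (hb : b.Coprime u) :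
    divergenceSum (a * u) (b * u) = divergenceSum a b := by
  have factorization_eq_zero {n r : ℕ} (h : r ∉ n.primeFactors) : n.factorization r = 0 :=
    Finsupp.notMem_support_iff.mp h
  rw [divergenceSum, ha.primeFactors_mul, sum_union ha.disjoint_primeFactors,
    Nat.factorization_mul_of_coprime ha, Nat.factorization_mul_of_coprime hb,
    sum_eq_zero (s := u.primeFactors), add_zero]
  · refine sum_congr rfl fun r hr => ?_
    rw [Finsupp.add_apply, Finsupp.add_apply,
      factorization_eq_zero (ha.disjoint_primeFactors.notMem_of_mem_left_finset hr), add_zero,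
      add_zero]
  -- the primes of `u` occur to the same power in `a * u` and `b * u`
  · intro r hr
    rw [Finsupp.add_apply, Finsupp.add_apply,
      factorization_eq_zero (ha.disjoint_primeFactors.notMem_of_mem_right_finset hr),
      factorization_eq_zero (hb.disjoint_primeFactors.notMem_of_mem_right_finset hr), zero_add,
      Real.log_div_self, mul_zero]

theorem numDivergence_mul_coprime_le {a b u : ℕ} (hpf : a.primeFactors = b.primeFactors)
    (hΩ : Ω a = Ω b) (ha : 1 < a) (hau : a.Coprime u) (hbu : b.Coprime u) :
    numDivergence (a * u) (b * u) ≤ numDivergence a b := by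
  have hpf' : (a * u).primeFactors = (b * u).primeFactors := by
    rw [hau.primeFactors_mul, hbu.primeFactors_mul, hpf]
  have hS : divergenceSum a b ≤ 0 := by simpa [hΩ] using divergenceSum_le hpf
  rw [numDivergence_eq_of_primeFactors_eq hpf, numDivergence_eq_of_primeFactors_eq hpf',
    divergenceSum_mul_coprime hau hbu, hau.cardFactors_mul, hbu.cardFactors_mul, hΩ]
  have hb : (0 : ℝ) < Ω b := by exact_mod_cast hΩ ▸ cardFactors_pos_iff_one_lt.mpr ha
  push_cast
  rw [div_self (by positivity), div_self hb.ne', Real.log_one, zero_sub, zero_sub, ← neg_div,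
    ← neg_div]
  exact div_le_div_of_nonneg_left (neg_nonneg.mpr hS) hb (by simp)

theorem Nat.primeFactors_prime_pow_mul_prime_pow {p q a b : ℕ} (hp : p.Prime) (hq : q.Prime)
    (ha : a ≠ 0) (hb : b ≠ 0) : (p ^ a * q ^ b).primeFactors = {p, q} := by
  rw [Nat.primeFactors_mul (pow_ne_zero _ hp.ne_zero) (pow_ne_zero _ hq.ne_zero),
    Nat.primeFactors_pow _ ha, Nat.primeFactors_pow _ hb, hp.primeFactors, hq.primeFactors]
  rfl

theorem ArithmeticFunction.cardFactors_prime_pow_mul_prime_pow {p q a b : ℕ} (hp : p.Prime)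
    (hq : q.Prime) : Ω (p ^ a * q ^ b) = a + b := by
  rw [cardFactors_mul (pow_ne_zero _ hp.ne_zero) (pow_ne_zero _ hq.ne_zero),
    cardFactors_apply_prime_pow hp, cardFactors_apply_prime_pow hq]

theorem divergence_mul_coprime_le_general (p q α β ε : ℕ) (hp : p.Prime) (hq : q.Prime)
    (hα : 0 < α) (hβ : 0 < β) (hε : ε < β)
    (n m : ℕ) (hn : n = p ^ α * q ^ β) (hm : m = p ^ (α + ε) * q ^ (β - ε))
    (u : ℕ) (hmu : Nat.gcd m u = 1) (hnu : Nat.gcd n u = 1) :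
    numDivergence (n * u) (m * u) ≤ numDivergence n m := by
  subst hn hm
  refine numDivergence_mul_coprime_le ?_ ?_ ?_ hnu hmu
  · rw [Nat.primeFactors_prime_pow_mul_prime_pow hp hq hα.ne' hβ.ne',
      Nat.primeFactors_prime_pow_mul_prime_pow hp hq (by omega) (by omega)]
  · rw [cardFactors_prime_pow_mul_prime_pow hp hq, cardFactors_prime_pow_mul_prime_pow hp hq]
    omega
  · rw [← cardFactors_pos_iff_one_lt, cardFactors_prime_pow_mul_prime_pow hp hq]
    omega

theorem divergence_mul_coprime_le (p q α β ε : ℕ) (hp : p.Prime) (hq : q.Prime)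
    (hpq : p < q) (hα : 0 < α) (hβ : 0 < β) (hε : ε < β)
    (n m : ℕ) (hn : n = p ^ α * q ^ β) (hm : m = p ^ (α + ε) * q ^ (β - ε))
    (u : ℕ) (hu : 2 ≤ u) (hmu : Nat.gcd m u = 1) (hnu : Nat.gcd n u = 1) :
    numDivergence (n * u) (m * u) ≤ numDivergence n m :=
  divergence_mul_coprime_le_general p q α β ε hp hq hα hβ hε n m hn hm u hmu hnu
end

section
/- Let K be a number field with ring of integers 𝒪_K, let P_1 and P_2 be distinct prime ideals of 𝒪_K, let α, β be positive integers and ε a natural number with (β − α)/2 ≥ ε, and set I = P_1^{α}·P_2^{β} and J = P_1^{α+ε}·P_2^{β−ε}. Then 0 ≤ H(J) − H(I) ≤ (α·log α + β·log β)/(α + β) − log((α + β)/2). -/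
open NumberField UniqueFactorizationMonoid

/-- `Ω(I)`: the number of prime ideal factors of `I`, counted with multiplicity. -/
noncomputable def idealBigOmega {K : Type*} [Field K] [NumberField K]
    (I : Ideal (𝓞 K)) : ℕ :=
  Multiset.card (normalizedFactors I)

open scoped Classical in
/-- `ω(I)`: the number of distinct prime ideal factors of `I`. -/
noncomputable def idealSmallOmega {K : Type*} [Field K] [NumberField K]
    (I : Ideal (𝓞 K)) : ℕ :=
  (normalizedFactors I).toFinset.card

open scoped Classical in
/-- The entropy of an ideal `I = P_1^{e_1} ⋯ P_g^{e_g}` of the ring of integers: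
`H(I) = log Ω(I) − (1/Ω(I)) ∑_i e_i log e_i`. -/
noncomputable def idealEntropy {K : Type*} [Field K] [NumberField K]
    (I : Ideal (𝓞 K)) : ℝ :=
  Real.log (idealBigOmega I : ℝ) -
    (1 / (idealBigOmega I : ℝ)) *
      ∑ P ∈ (normalizedFactors I).toFinset,
        ((normalizedFactors I).count P : ℝ) * Real.log ((normalizedFactors I).count P)

/-! The entropy of `P₁ ^ a * P₂ ^ b` is the binary entropy `h(p)` of the share
`p = a / (a + b)` of `P₁`. Moving `ε` factors from `P₂` to `P₁` keeps `a + b` fixed and raises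
`p` from `α / (α + β)` to at most `1 / 2`, where `h` is increasing; and `h ≤ log 2` everywhere
bounds the gain by `log 2 - h(α / (α + β))`. -/

lemma Real.binEntropy_div_add {a b : ℝ} (ha : 0 < a) (hb : 0 < b) :
    Real.binEntropy (a / (a + b)) =
      Real.log (a + b) - (a * Real.log a + b * Real.log b) / (a + b) := by
  have hab : 0 < a + b := by positivity
  have hsub : 1 - a / (a + b) = b / (a + b) := by field_simp; ring
  rw [Real.binEntropy, hsub, inv_div, inv_div, Real.log_div hab.ne' ha.ne',
    Real.log_div hab.ne' hb.ne']
  field_simp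
  ring

lemma Ideal.normalizedFactors_pow_mul_pow {R : Type*} [CommRing R] [IsDedekindDomain R]
    {P Q : Ideal R} (hP : Prime P) (hQ : Prime Q) (a b : ℕ) :
    normalizedFactors (P ^ a * Q ^ b) = Multiset.replicate a P + Multiset.replicate b Q := by
  rw [normalizedFactors_mul (pow_ne_zero _ hP.ne_zero) (pow_ne_zero _ hQ.ne_zero),
    normalizedFactors_of_irreducible_pow hP.irreducible,
    normalizedFactors_of_irreducible_pow hQ.irreducible, normalize_eq, normalize_eq]

lemma idealEntropy_pow_mul_pow {K : Type*} [Field K] [NumberField K] {P Q : Ideal (𝓞 K)}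
    (hP : Prime P) (hQ : Prime Q) (hPQ : P ≠ Q) {a b : ℕ} (ha : 0 < a) (hb : 0 < b) :
    idealEntropy (P ^ a * Q ^ b) = Real.binEntropy (a / (a + b)) := by
  have hfac := Ideal.normalizedFactors_pow_mul_pow hP hQ a b
  have hΩ : idealBigOmega (P ^ a * Q ^ b) = a + b := by simp [idealBigOmega, hfac]
  have hsupp : (normalizedFactors (P ^ a * Q ^ b)).toFinset = {P, Q} := by
    simp [hfac, Multiset.toFinset_replicate, ha.ne', hb.ne']
  have hcountP : (normalizedFactors (P ^ a * Q ^ b)).count P = a := by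
    simp [hfac, Multiset.count_replicate, hPQ.symm]
  have hcountQ : (normalizedFactors (P ^ a * Q ^ b)).count Q = b := by
    simp [hfac, Multiset.count_replicate, hPQ]
  rw [idealEntropy, hΩ, hsupp, Finset.sum_pair hPQ, hcountP, hcountQ,
    Real.binEntropy_div_add (by exact_mod_cast ha) (by exact_mod_cast hb)]
  push_cast
  ring

theorem idealEntropy_diff_nonneg_and_le {K : Type*} [Field K] [NumberField K]
    (P₁ P₂ : Ideal (𝓞 K)) (hP₁ : Prime P₁) (hP₂ : Prime P₂) (hne : P₁ ≠ P₂)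
    (α β ε : ℕ) (hα : 0 < α) (hβ : 0 < β)
    (hε : (ε : ℝ) ≤ ((β : ℝ) - (α : ℝ)) / 2)
    (I J : Ideal (𝓞 K)) (hI : I = P₁ ^ α * P₂ ^ β)
    (hJ : J = P₁ ^ (α + ε) * P₂ ^ (β - ε)) :
    0 ≤ idealEntropy J - idealEntropy I ∧
      idealEntropy J - idealEntropy I ≤
        ((α : ℝ) * Real.log α + (β : ℝ) * Real.log β) / ((α : ℝ) + β) -
          Real.log (((α : ℝ) + β) / 2) := by
  have hα' : (0 : ℝ) < α := by exact_mod_cast hα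
  have hεβ : ε < β := by exact_mod_cast (by linarith : (ε : ℝ) < β)
  have hcast : (((α + ε : ℕ) : ℝ) + ((β - ε : ℕ) : ℝ)) = α + β := by
    push_cast [hεβ.le]; ring
  subst hI hJ
  rw [idealEntropy_pow_mul_pow hP₁ hP₂ hne (by omega) (by omega), hcast,
    idealEntropy_pow_mul_pow hP₁ hP₂ hne hα hβ]
  have hαβ : (0 : ℝ) < α + β := by positivity
  have hshift : (α : ℝ) / (α + β) ≤ ((α + ε : ℕ) : ℝ) / (α + β) := by
    gcongr; exact_mod_cast Nat.le_add_right α ε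
  have hhalf : ((α + ε : ℕ) : ℝ) / (α + β) ≤ 2⁻¹ := by
    rw [div_le_iff₀ hαβ]; push_cast; linarith
  constructor
  · exact sub_nonneg.2 <| Real.binEntropy_strictMonoOn.monotoneOn
      ⟨by positivity, hshift.trans hhalf⟩ ⟨by positivity, hhalf⟩ hshift
  · rw [Real.binEntropy_div_add hα' (by exact_mod_cast hβ), Real.log_div hαβ.ne' two_ne_zero]
    linarith [Real.binEntropy_le_log_two (p := ((α + ε : ℕ) : ℝ) / (α + β))]
end
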